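/- There is an absolute constant C > 0 such that for every integer n ≥ 2, the n × n grid graph (with unit edge weights, having N = n² vertices) has a spanning tree T with total stretch st(T) ≤ C · n² · log n; equivalently, the average stretch st(T)/m over the m = Θ(n²) edges is O(log n). -/

import Mathlib

def gridGraph (k l : ℕ) : SimpleGraph (Fin k × Fin l) :=
  SimpleGraph.fromRel (fun a b =>
    (a.1 = b.1 ∧ a.2.val + 1 = b.2.val) ∨ (a.2 = b.2 ∧ a.1.val + 1 = b.1.val))

instance (k l : ℕ) : DecidableRel (gridGraph k l).Adj := fun a b =>
  decidable_of_iff _ (SimpleGraph.fromRel_adj _ a b).symm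

namespace GridStretch

/-- 2-adic valuation (with junk value `0` at `0`). -/
def v2 (b : ℕ) : ℕ := b.factorization 2

lemma pow_v2_dvd (b : ℕ) : 2 ^ v2 b ∣ b := by
  rcases eq_or_ne b 0 with rfl | hb
  · simp
  · exact Nat.ordProj_dvd b 2

lemma pow_dvd_iff_le_v2 {b k : ℕ} (hb : b ≠ 0) : 2 ^ k ∣ b ↔ k ≤ v2 b :=
  Nat.Prime.pow_dvd_iff_le_factorization Nat.prime_two hb

variable {n : ℕ}

/-- the parent map of the low-stretch spanning tree. -/
def par (v : Fin n × Fin n) : Fin n × Fin n :=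
  if 0 < v.2.val ∧ 2 ^ v2 v.2.val ∣ v.1.val then
    (v.1, ⟨v.2.val - 1, lt_of_le_of_lt (Nat.sub_le _ _) v.2.isLt⟩)
  else
    (⟨v.1.val - 1, lt_of_le_of_lt (Nat.sub_le _ _) v.1.isLt⟩, v.2)

/-- measure of a vertex -/
def mu (v : Fin n × Fin n) : ℕ := v.1.val + v.2.val

lemma mu_par_of_ne (v : Fin n × Fin n) (h : mu v ≠ 0) : mu (par v) + 1 = mu v := by
  unfold par mu at *
  split
  · next hc => simp only []; omega
  · next hc =>
    simp only []
    rcases Nat.eq_zero_or_pos v.1.val with h1 | h1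
    · exfalso; exact hc ⟨by omega, h1 ▸ dvd_zero _⟩
    · omega

lemma mu_par_le (v : Fin n × Fin n) : mu (par v) ≤ mu v := by
  rcases eq_or_ne (mu v) 0 with h | h
  · unfold par mu at *
    split
    · omega
    · simp only []; omega
  · have := mu_par_of_ne v h; omega

lemma par_of_mu_eq_zero (v : Fin n × Fin n) (h : mu v = 0) : par v = v := by
  have h1 : v.1.val = 0 := by unfold mu at h; omega
  have h2 : v.2.val = 0 := by unfold mu at h; omega
  unfold par
  rw [if_neg (by omega)]
  refine Prod.ext ?_ ?_
  · exact Fin.ext (by simp [h1])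
  · rfl

lemma mu_iter_par_le (k : ℕ) (v : Fin n × Fin n) : mu (par^[k] v) ≤ mu v := by
  induction k with
  | zero => simp
  | succ k ih =>
    rw [Function.iterate_succ_apply']
    exact (mu_par_le _).trans ih

/-- The spanning tree. -/
def T (n : ℕ) : SimpleGraph (Fin n × Fin n) :=
  SimpleGraph.fromRel (fun a b => mu a ≠ 0 ∧ b = par a)

lemma par_ne (v : Fin n × Fin n) (h : mu v ≠ 0) : par v ≠ v := by
  intro he
  have := mu_par_of_ne v h
  rw [he] at this
  omega

lemma T_adj_par (v : Fin n × Fin n) (h : mu v ≠ 0) : (T n).Adj v (par v) := by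
  rw [T, SimpleGraph.fromRel_adj]
  exact ⟨fun he => par_ne v h he.symm, Or.inl ⟨h, rfl⟩⟩

end GridStretch

namespace GridStretch
variable {n : ℕ}

lemma x_pos_of_left (v : Fin n × Fin n) (h : mu v ≠ 0)
    (hc : ¬(0 < v.2.val ∧ 2 ^ v2 v.2.val ∣ v.1.val)) : 0 < v.1.val := by
  rcases Nat.eq_zero_or_pos v.1.val with h1 | h1
  · exfalso; exact hc ⟨by unfold mu at h; omega, h1 ▸ dvd_zero _⟩
  · exact h1

lemma grid_adj_par (v : Fin n × Fin n) (h : mu v ≠ 0) : (gridGraph n n).Adj v (par v) := by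
  rw [gridGraph, SimpleGraph.fromRel_adj]
  unfold par
  split
  · next hc =>
    constructor
    · intro he
      have := congrArg (fun p => (p.2 : Fin n).val) he
      simp only [] at this
      omega
    · right; left
      exact ⟨rfl, by simp only []; omega⟩
  · next hc =>
    have h1 : 0 < v.1.val := x_pos_of_left v h hc
    constructor
    · intro he
      have := congrArg (fun p => (p.1 : Fin n).val) he
      simp only [] at this
      omega
    · right; right
      exact ⟨rfl, by simp only []; omega⟩

lemma T_le_grid : T n ≤ gridGraph n n := by
  intro a b hab
  rw [T, SimpleGraph.fromRel_adj] at hab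
  obtain ⟨hne, h | h⟩ := hab
  · exact h.2 ▸ grid_adj_par a h.1
  · exact (h.2 ▸ grid_adj_par b h.1).symm

lemma reach_aux : ∀ (k : ℕ) (v u : Fin n × Fin n), mu v ≤ k → mu u = 0 →
    (T n).Reachable v u := by
  intro k
  induction k with
  | zero =>
    intro v u hv hu
    have : v = u := by
      unfold mu at hv hu
      refine Prod.ext (Fin.ext ?_) (Fin.ext ?_) <;> omega
    exact this ▸ SimpleGraph.Reachable.refl v
  | succ k ih =>
    intro v u hv hu
    rcases eq_or_ne (mu v) 0 with h | h
    · exact ih v u (by omega) hu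
    · have h2 := mu_par_of_ne v h
      exact (T_adj_par v h).reachable.trans (ih (par v) u (by omega) hu)

lemma T_connected (hn : 0 < n) : (T n).Connected := by
  have hroot : mu ((⟨0, hn⟩, ⟨0, hn⟩) : Fin n × Fin n) = 0 := by simp [mu]
  rw [SimpleGraph.connected_iff]
  refine ⟨fun u v => ?_, ⟨(⟨0, hn⟩, ⟨0, hn⟩)⟩⟩
  exact (reach_aux (mu u) u _ le_rfl hroot).trans (reach_aux (mu v) v _ le_rfl hroot).symm

/-- descendants of `a` -/
def desc (a x : Fin n × Fin n) : Prop := ∃ k, par^[k] x = a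

lemma desc_step {a x y : Fin n × Fin n} (hx : desc a x) (hxy : (T n).Adj x y)
    (hne : s(x, y) ≠ s(a, par a)) : desc a y := by
  rw [T, SimpleGraph.fromRel_adj] at hxy
  obtain ⟨_, ⟨hmu, rfl⟩ | ⟨hmu, rfl⟩⟩ := hxy
  · obtain ⟨k, hk⟩ := hx
    cases k with
    | zero =>
      exfalso; apply hne
      simp only [Function.iterate_zero_apply] at hk
      rw [hk]
    | succ k =>
      exact ⟨k, by rw [← Function.iterate_succ_apply]; exact hk⟩
  · obtain ⟨k, hk⟩ := hx
    exact ⟨k + 1, by rw [Function.iterate_succ_apply, hk]⟩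

lemma desc_walk {a x y : Fin n × Fin n} (p : (T n).Walk x y) (hx : desc a x)
    (he : s(a, par a) ∉ p.edges) : desc a y := by
  induction p with
  | nil => exact hx
  | cons h q ih =>
    rw [SimpleGraph.Walk.edges_cons, List.mem_cons] at he
    push_neg at he
    exact ih (desc_step hx h (Ne.symm he.1)) he.2

lemma not_desc_par (a : Fin n × Fin n) (h : mu a ≠ 0) : ¬ desc a (par a) := by
  rintro ⟨k, hk⟩
  have h1 : mu (par^[k] (par a)) ≤ mu (par a) := mu_iter_par_le k (par a)
  have h2 := mu_par_of_ne a h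
  rw [hk] at h1
  omega

lemma T_isAcyclic : (T n).IsAcyclic := by
  rw [SimpleGraph.isAcyclic_iff_forall_adj_isBridge]
  intro v w hadj
  have hadj' := hadj
  rw [T, SimpleGraph.fromRel_adj] at hadj'
  rw [SimpleGraph.isBridge_iff_adj_and_forall_walk_mem_edges]
  refine fun p => ?_
  by_contra he
  obtain ⟨hne, ⟨hmu, rfl⟩ | ⟨hmu, rfl⟩⟩ := hadj'
  · exact not_desc_par v hmu (desc_walk p ⟨0, rfl⟩ he)
  · apply not_desc_par w hmu
    refine desc_walk p.reverse ⟨0, rfl⟩ ?_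
    rw [SimpleGraph.Walk.edges_reverse, List.mem_reverse]
    rw [Sym2.eq_swap]
    exact he

lemma T_isTree (hn : 0 < n) : (T n).IsTree := ⟨T_connected hn, T_isAcyclic⟩

end GridStretch

namespace GridStretch
variable {n : ℕ}

lemma sub_one_div_mod {B y : ℕ} (hB : 0 < B) (hy : y % B ≠ 0) :
    (y - 1) / B = y / B ∧ (y - 1) % B = y % B - 1 := by
  have h1 := Nat.div_add_mod y B
  have h2 : y % B < B := Nat.mod_lt _ hB
  have h3 : y - 1 = B * (y / B) + (y % B - 1) := by omega
  constructor
  · rw [h3, Nat.mul_add_div hB, Nat.div_eq_of_lt (show y % B - 1 < B by omega), add_zero]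
  · rw [h3, Nat.mul_add_mod, Nat.mod_eq_of_lt (by omega)]

lemma mod_eq_zero_of_dvd {B y : ℕ} (h : B ∣ y) : y % B = 0 := by
  obtain ⟨c, rfl⟩ := h; exact Nat.mul_mod_right _ _

lemma par_block (m : ℕ) (v : Fin n × Fin n)
    (h : v.1.val % 2 ^ m + v.2.val % 2 ^ m ≠ 0) :
    (par v).1.val % 2 ^ m + (par v).2.val % 2 ^ m + 1 = v.1.val % 2 ^ m + v.2.val % 2 ^ m ∧
    (par v).1.val / 2 ^ m = v.1.val / 2 ^ m ∧ (par v).2.val / 2 ^ m = v.2.val / 2 ^ m := by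
  have hB : 0 < 2 ^ m := Nat.pow_pos (by norm_num)
  by_cases hc : 0 < v.2.val ∧ 2 ^ v2 v.2.val ∣ v.1.val
  · have hp1 : (par v).1.val = v.1.val := by simp only [par, if_pos hc]
    have hp2 : (par v).2.val = v.2.val - 1 := by simp only [par, if_pos hc]
    have hy : v.2.val % 2 ^ m ≠ 0 := by
      intro h0
      have hd : 2 ^ m ∣ v.2.val := Nat.dvd_of_mod_eq_zero h0
      have hle : m ≤ v2 v.2.val := (pow_dvd_iff_le_v2 (by omega)).mp hd
      have hx : v.1.val % 2 ^ m = 0 :=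
        mod_eq_zero_of_dvd (dvd_trans (pow_dvd_pow 2 hle) hc.2)
      omega
    obtain ⟨hd, hm⟩ := sub_one_div_mod hB hy
    rw [hp1, hp2, hd, hm]
    exact ⟨by omega, rfl, rfl⟩
  · have hmu : mu v ≠ 0 := by
      intro h0
      unfold mu at h0
      have h1 : v.1.val = 0 := by omega
      have h2 : v.2.val = 0 := by omega
      rw [h1, h2, Nat.zero_mod] at h
      exact h rfl
    have hx0 : 0 < v.1.val := x_pos_of_left v hmu hc
    have hp1 : (par v).1.val = v.1.val - 1 := by simp only [par, if_neg hc]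
    have hp2 : (par v).2.val = v.2.val := by simp only [par, if_neg hc]
    have hx : v.1.val % 2 ^ m ≠ 0 := by
      intro h0
      have hd : 2 ^ m ∣ v.1.val := Nat.dvd_of_mod_eq_zero h0
      have hy : v.2.val % 2 ^ m ≠ 0 := by
        intro hy0; rw [h0, hy0] at h; exact h rfl
      have hyne : v.2.val ≠ 0 := by
        intro hy0; rw [hy0, Nat.zero_mod] at hy; exact hy rfl
      have hlt : v2 v.2.val < m := by
        by_contra hge
        push_neg at hge
        exact hy (mod_eq_zero_of_dvd (dvd_trans (pow_dvd_pow 2 hge) (pow_v2_dvd v.2.val)))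
      exact hc ⟨by omega, dvd_trans (pow_dvd_pow 2 hlt.le) hd⟩
    obtain ⟨hd, hm⟩ := sub_one_div_mod hB hx
    rw [hp1, hp2, hd, hm]
    exact ⟨by omega, rfl, rfl⟩

lemma iter_corner (m : ℕ) : ∀ (r : ℕ) (v : Fin n × Fin n),
    v.1.val % 2 ^ m + v.2.val % 2 ^ m = r →
    ∃ k ≤ r, (par^[k] v).1.val = 2 ^ m * (v.1.val / 2 ^ m) ∧
      (par^[k] v).2.val = 2 ^ m * (v.2.val / 2 ^ m) := by
  intro r
  induction r with
  | zero =>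
    intro v hv
    refine ⟨0, le_rfl, ?_, ?_⟩ <;> simp only [Function.iterate_zero_apply]
    · exact (Nat.mul_div_cancel' (Nat.dvd_of_mod_eq_zero (by omega))).symm
    · exact (Nat.mul_div_cancel' (Nat.dvd_of_mod_eq_zero (by omega))).symm
  | succ r ih =>
    intro v hv
    obtain ⟨hsum, hd1, hd2⟩ := par_block m v (by omega)
    obtain ⟨k, hk, h1, h2⟩ := ih (par v) (by omega)
    exact ⟨k + 1, by omega,
      by rw [Function.iterate_succ_apply, h1, hd1],
      by rw [Function.iterate_succ_apply, h2, hd2]⟩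

lemma walk_iter : ∀ (k : ℕ) (v : Fin n × Fin n),
    ∃ w : (T n).Walk v (par^[k] v), w.length ≤ k := by
  intro k
  induction k with
  | zero => exact fun v => ⟨SimpleGraph.Walk.nil.copy rfl (by simp), by simp⟩
  | succ k ih =>
    intro v
    rcases eq_or_ne (mu v) 0 with h | h
    · have hfix : par^[k + 1] v = v := Function.iterate_fixed (par_of_mu_eq_zero v h) (k + 1)
      exact ⟨SimpleGraph.Walk.nil.copy rfl hfix.symm, by rw [SimpleGraph.Walk.length_copy, SimpleGraph.Walk.length_nil]; omega⟩
    · obtain ⟨w, hw⟩ := ih (par v)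
      refine ⟨(SimpleGraph.Walk.cons (T_adj_par v h) w).copy rfl
        (Function.iterate_succ_apply par k v).symm, ?_⟩
      rw [SimpleGraph.Walk.length_copy, SimpleGraph.Walk.length_cons]
      omega

lemma dist_le_of_common_corner (m : ℕ) (u v : Fin n × Fin n)
    (h1 : u.1.val / 2 ^ m = v.1.val / 2 ^ m) (h2 : u.2.val / 2 ^ m = v.2.val / 2 ^ m) :
    (T n).dist u v ≤ (u.1.val % 2 ^ m + u.2.val % 2 ^ m) +
      (v.1.val % 2 ^ m + v.2.val % 2 ^ m) := by
  obtain ⟨ku, hku, hu1, hu2⟩ := iter_corner m _ u rfl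
  obtain ⟨kv, hkv, hv1, hv2⟩ := iter_corner m _ v rfl
  have hcc : par^[kv] v = par^[ku] u := by
    refine Prod.ext (Fin.ext ?_) (Fin.ext ?_)
    · rw [hu1, hv1, h1]
    · rw [hu2, hv2, h2]
  obtain ⟨wu, hwu⟩ := walk_iter ku u
  obtain ⟨wv, hwv⟩ := walk_iter kv v
  let wv' := wv.copy rfl hcc
  let w : (T n).Walk u v := wu.append wv'.reverse
  calc (T n).dist u v ≤ w.length := SimpleGraph.dist_le w
    _ = wu.length + wv.length := by
      simp only [w, SimpleGraph.Walk.length_append, SimpleGraph.Walk.length_reverse,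
        SimpleGraph.Walk.length_copy, wv']
    _ ≤ _ := by omega

end GridStretch

namespace GridStretch
variable {n : ℕ}

lemma dist_bound_vert (u v : Fin n × Fin n) (h1 : u.1 = v.1) (h2 : u.2.val + 1 = v.2.val) :
    ((T n).dist u v : ℝ) ≤ 8 * 2 ^ v2 v.2.val := by
  set j := v2 v.2.val with hj
  have hB : 0 < 2 ^ (j + 1) := Nat.pow_pos (by norm_num)
  have hbne : v.2.val ≠ 0 := by omega
  have hmod : v.2.val % 2 ^ (j + 1) ≠ 0 := by
    intro h0
    have := (pow_dvd_iff_le_v2 hbne).mp (Nat.dvd_of_mod_eq_zero h0)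
    omega
  obtain ⟨hdiv, -⟩ := sub_one_div_mod hB hmod
  have hu2 : u.2.val = v.2.val - 1 := by omega
  have hd := dist_le_of_common_corner (j + 1) u v (by rw [h1]) (by rw [hu2, hdiv])
  have m1 : u.1.val % 2 ^ (j + 1) < 2 ^ (j + 1) := Nat.mod_lt _ hB
  have m2 : u.2.val % 2 ^ (j + 1) < 2 ^ (j + 1) := Nat.mod_lt _ hB
  have m3 : v.1.val % 2 ^ (j + 1) < 2 ^ (j + 1) := Nat.mod_lt _ hB
  have m4 : v.2.val % 2 ^ (j + 1) < 2 ^ (j + 1) := Nat.mod_lt _ hB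
  have hfin : (T n).dist u v ≤ 4 * 2 ^ (j + 1) := by omega
  calc ((T n).dist u v : ℝ) ≤ ((4 * 2 ^ (j + 1) : ℕ) : ℝ) := Nat.cast_le.mpr hfin
    _ = 8 * 2 ^ j := by push_cast [pow_succ]; ring

lemma dist_bound_horiz (u v : Fin n × Fin n) (h1 : u.2 = v.2) (h2 : u.1.val + 1 = v.1.val) :
    ((T n).dist u v : ℝ) ≤ 8 * 2 ^ v2 v.1.val := by
  set j := v2 v.1.val with hj
  have hB : 0 < 2 ^ (j + 1) := Nat.pow_pos (by norm_num)
  have hbne : v.1.val ≠ 0 := by omega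
  have hmod : v.1.val % 2 ^ (j + 1) ≠ 0 := by
    intro h0
    have := (pow_dvd_iff_le_v2 hbne).mp (Nat.dvd_of_mod_eq_zero h0)
    omega
  obtain ⟨hdiv, -⟩ := sub_one_div_mod hB hmod
  have hu1 : u.1.val = v.1.val - 1 := by omega
  have hd := dist_le_of_common_corner (j + 1) u v (by rw [hu1, hdiv]) (by rw [h1])
  have m1 : u.1.val % 2 ^ (j + 1) < 2 ^ (j + 1) := Nat.mod_lt _ hB
  have m2 : u.2.val % 2 ^ (j + 1) < 2 ^ (j + 1) := Nat.mod_lt _ hB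
  have m3 : v.1.val % 2 ^ (j + 1) < 2 ^ (j + 1) := Nat.mod_lt _ hB
  have m4 : v.2.val % 2 ^ (j + 1) < 2 ^ (j + 1) := Nat.mod_lt _ hB
  have hfin : (T n).dist u v ≤ 4 * 2 ^ (j + 1) := by omega
  calc ((T n).dist u v : ℝ) ≤ ((4 * 2 ^ (j + 1) : ℕ) : ℝ) := Nat.cast_le.mpr hfin
    _ = 8 * 2 ^ j := by push_cast [pow_succ]; ring

end GridStretch


namespace GridStretch

lemma geom_aux (t : ℕ) : (1 : ℝ) + ∑ j ∈ Finset.Icc 1 t, (2 : ℝ) ^ (j - 1) = 2 ^ t := by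
  have h : ∑ j ∈ Finset.Icc 1 t, (2 : ℝ) ^ (j - 1) = ∑ i ∈ Finset.range t, (2 : ℝ) ^ i := by
    refine Finset.sum_nbij' (fun j => j - 1) (fun i => i + 1) ?_ ?_ ?_ ?_ ?_
    · intro a ha
      simp only [Finset.mem_Icc] at ha
      simp only [Finset.mem_range]
      omega
    · intro a ha
      simp only [Finset.mem_range] at ha
      simp only [Finset.mem_Icc]
      omega
    · intro a ha
      simp only [Finset.mem_Icc] at ha
      omega
    · intro a ha
      omega
    · intro a ha
      rfl
  rw [h, geom_sum_eq (by norm_num : (2:ℝ) ≠ 1) t]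
  ring

end GridStretch

namespace GridStretch

lemma card_mult_le (n j : ℕ) (hn : 0 < n) (hj : 1 ≤ j) :
    (2 : ℝ) ^ (j - 1) * ((Finset.range n).filter (fun i => 2 ^ j ∣ i ∧ i ≠ 0)).card
      ≤ (n : ℝ) / 2 := by
  have hd : 0 < 2 ^ j := Nat.pow_pos (by norm_num)
  have hcard : ((Finset.range n).filter (fun i => 2 ^ j ∣ i ∧ i ≠ 0)).card ≤ n / 2 ^ j := by
    have hc2 : ((Finset.range n).filter (fun i => 2 ^ j ∣ i ∧ i ≠ 0)).card
        ≤ (Finset.Icc 1 (n / 2 ^ j)).card := by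
      apply Finset.card_le_card_of_injOn (fun i => i / 2 ^ j)
      · intro i hi
        simp only [Finset.mem_coe, Finset.mem_filter, Finset.mem_range] at hi
        obtain ⟨hin, hdvd, hi0⟩ := hi
        exact Finset.mem_Icc.mpr ⟨(Nat.one_le_div_iff hd).mpr
          (Nat.le_of_dvd (Nat.pos_of_ne_zero hi0) hdvd), Nat.div_le_div_right (by omega)⟩
      · intro a ha b hb hab
        simp only [Finset.mem_coe, Finset.mem_filter] at ha hb
        have ha' : 2 ^ j * (a / 2 ^ j) = a := Nat.mul_div_cancel' ha.2.1
        have hb' : 2 ^ j * (b / 2 ^ j) = b := Nat.mul_div_cancel' hb.2.1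
        have hab' : a / 2 ^ j = b / 2 ^ j := hab
        rw [← ha', ← hb', hab']
    simpa [Nat.card_Icc] using hc2
  have h2 : ((((Finset.range n).filter (fun i => 2 ^ j ∣ i ∧ i ≠ 0)).card : ℕ) : ℝ)
      ≤ (n : ℝ) / 2 ^ j := by
    calc (_ : ℝ) ≤ ((n / 2 ^ j : ℕ) : ℝ) := Nat.cast_le.mpr hcard
      _ ≤ (n : ℝ) / 2 ^ j := by
        have := Nat.cast_div_le (m := n) (n := 2 ^ j) (α := ℝ)
        simpa using this
  obtain ⟨t, rfl⟩ : ∃ t, j = t + 1 := ⟨j - 1, by omega⟩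
  have hpos : (0 : ℝ) < 2 ^ (t + 1) := by positivity
  calc (2 : ℝ) ^ (t + 1 - 1) * _ ≤ (2 : ℝ) ^ t * ((n : ℝ) / 2 ^ (t + 1)) := by
        rw [show t + 1 - 1 = t by omega]
        exact mul_le_mul_of_nonneg_left h2 (by positivity)
    _ = (n : ℝ) / 2 := by
        rw [pow_succ]
        field_simp

lemma SS_le (n : ℕ) (hn : 2 ≤ n) :
    ∑ i ∈ Finset.range n, (2 : ℝ) ^ v2 i ≤ n + (Nat.log 2 n) * ((n : ℝ) / 2) := by
  set K := Nat.log 2 n with hKdef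
  have hpt : ∀ i ∈ Finset.range n, (2 : ℝ) ^ v2 i ≤
      1 + ∑ j ∈ Finset.Icc 1 K, (if 2 ^ j ∣ i ∧ i ≠ 0 then (2 : ℝ) ^ (j - 1) else 0) := by
    intro i hi
    rcases eq_or_ne i 0 with rfl | hi0
    · have : v2 0 = 0 := by simp [v2]
      rw [this]
      have hz : ∀ j ∈ Finset.Icc 1 K,
          (if 2 ^ j ∣ (0:ℕ) ∧ (0:ℕ) ≠ 0 then (2 : ℝ) ^ (j - 1) else 0) = 0 := by
        intro j _; rw [if_neg (by simp)]
      rw [Finset.sum_congr rfl hz]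
      simp
    · have htK : v2 i ≤ K := by
        have h1 : 2 ^ v2 i ≤ i := Nat.le_of_dvd (Nat.pos_of_ne_zero hi0) (pow_v2_dvd i)
        have h2 : v2 i ≤ Nat.log 2 i := (Nat.le_log_iff_pow_le (by norm_num) hi0).mpr h1
        exact h2.trans (Nat.log_mono_right (by
          simp only [Finset.mem_range] at hi; omega))
      have hsum : ∑ j ∈ Finset.Icc 1 (v2 i), (2 : ℝ) ^ (j - 1) ≤
          ∑ j ∈ Finset.Icc 1 K, (if 2 ^ j ∣ i ∧ i ≠ 0 then (2 : ℝ) ^ (j - 1) else 0) := by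
        calc ∑ j ∈ Finset.Icc 1 (v2 i), (2 : ℝ) ^ (j - 1)
            = ∑ j ∈ Finset.Icc 1 (v2 i),
                (if 2 ^ j ∣ i ∧ i ≠ 0 then (2 : ℝ) ^ (j - 1) else 0) := by
              refine (Finset.sum_congr rfl ?_).symm
              intro j hj
              simp only [Finset.mem_Icc] at hj
              rw [if_pos ⟨dvd_trans (pow_dvd_pow 2 hj.2) (pow_v2_dvd i), hi0⟩]
          _ ≤ _ := by
              refine Finset.sum_le_sum_of_subset_of_nonneg
                (Finset.Icc_subset_Icc_right htK) ?_
              intro j _ _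
              split
              · positivity
              · exact le_rfl
      have hg := geom_aux (v2 i)
      linarith
  have h1 : ∑ i ∈ Finset.range n, (2 : ℝ) ^ v2 i ≤
      ∑ i ∈ Finset.range n, (1 + ∑ j ∈ Finset.Icc 1 K,
        (if 2 ^ j ∣ i ∧ i ≠ 0 then (2 : ℝ) ^ (j - 1) else 0)) :=
    Finset.sum_le_sum hpt
  have h2 : ∑ i ∈ Finset.range n, (1 + ∑ j ∈ Finset.Icc 1 K,
        (if 2 ^ j ∣ i ∧ i ≠ 0 then (2 : ℝ) ^ (j - 1) else 0))
      = n + ∑ j ∈ Finset.Icc 1 K, ∑ i ∈ Finset.range n,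
        (if 2 ^ j ∣ i ∧ i ≠ 0 then (2 : ℝ) ^ (j - 1) else 0) := by
    rw [Finset.sum_add_distrib, Finset.sum_const, Finset.card_range, nsmul_eq_mul, mul_one,
      Finset.sum_comm]
  have h3 : ∀ j ∈ Finset.Icc 1 K, ∑ i ∈ Finset.range n,
        (if 2 ^ j ∣ i ∧ i ≠ 0 then (2 : ℝ) ^ (j - 1) else 0) ≤ (n : ℝ) / 2 := by
    intro j hj
    simp only [Finset.mem_Icc] at hj
    have : ∑ i ∈ Finset.range n, (if 2 ^ j ∣ i ∧ i ≠ 0 then (2 : ℝ) ^ (j - 1) else 0)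
        = ((Finset.range n).filter (fun i => 2 ^ j ∣ i ∧ i ≠ 0)).card * (2 : ℝ) ^ (j - 1) := by
      rw [← Finset.sum_filter, Finset.sum_const, nsmul_eq_mul]
    rw [this, mul_comm]
    exact card_mult_le n j (by omega) hj.1
  have h4 : ∑ j ∈ Finset.Icc 1 K, ∑ i ∈ Finset.range n,
        (if 2 ^ j ∣ i ∧ i ≠ 0 then (2 : ℝ) ^ (j - 1) else 0)
      ≤ K * ((n : ℝ) / 2) := by
    calc _ ≤ ∑ _j ∈ Finset.Icc 1 K, (n : ℝ) / 2 := Finset.sum_le_sum h3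
      _ = K * ((n : ℝ) / 2) := by
        rw [Finset.sum_const, nsmul_eq_mul, Nat.card_Icc]
        norm_num
  linarith

end GridStretch

namespace GridStretch
variable {n : ℕ}

def P (n : ℕ) : Finset ((Fin n × Fin n) × (Fin n × Fin n)) :=
  Finset.univ.filter (fun p =>
    (p.1.1 = p.2.1 ∧ p.1.2.val + 1 = p.2.2.val) ∨ (p.1.2 = p.2.2 ∧ p.1.1.val + 1 = p.2.1.val))

lemma relG_asymm {a b : Fin n × Fin n}
    (h1 : (a.1 = b.1 ∧ a.2.val + 1 = b.2.val) ∨ (a.2 = b.2 ∧ a.1.val + 1 = b.1.val))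
    (h2 : (b.1 = a.1 ∧ b.2.val + 1 = a.2.val) ∨ (b.2 = a.2 ∧ b.1.val + 1 = a.1.val)) :
    False := by
  obtain ⟨h11, h12⟩ | ⟨h11, h12⟩ := h1 <;> obtain ⟨h21, h22⟩ | ⟨h21, h22⟩ := h2
  · omega
  · have e2 : b.2.val = a.2.val := congrArg Fin.val h21
    omega
  · have e1 : a.2.val = b.2.val := congrArg Fin.val h11
    omega
  · omega

lemma relG_ne {a b : Fin n × Fin n}
    (h : (a.1 = b.1 ∧ a.2.val + 1 = b.2.val) ∨ (a.2 = b.2 ∧ a.1.val + 1 = b.1.val)) :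
    a ≠ b := by
  rintro rfl
  obtain ⟨_, h2⟩ | ⟨_, h2⟩ := h <;> omega

lemma edgeFinset_grid :
    (gridGraph n n).edgeFinset = (P n).image (fun p => s(p.1, p.2)) := by
  ext e
  induction e using Sym2.ind with
  | _ a b =>
    rw [SimpleGraph.mem_edgeFinset, Finset.mem_image]
    constructor
    · intro hadj
      rw [SimpleGraph.mem_edgeSet, gridGraph, SimpleGraph.fromRel_adj] at hadj
      obtain ⟨hne, h | h⟩ := hadj
      · exact ⟨(a, b), Finset.mem_filter.mpr ⟨Finset.mem_univ _, h⟩, rfl⟩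
      · exact ⟨(b, a), Finset.mem_filter.mpr ⟨Finset.mem_univ _, h⟩, Sym2.eq_swap⟩
    · rintro ⟨p, hp, he⟩
      have hrel := (Finset.mem_filter.mp hp).2
      have hmem : s(p.1, p.2) ∈ (gridGraph n n).edgeSet := by
        rw [SimpleGraph.mem_edgeSet, gridGraph, SimpleGraph.fromRel_adj]
        exact ⟨relG_ne hrel, Or.inl hrel⟩
      rw [he] at hmem
      exact hmem

lemma P_injOn :
    ∀ p ∈ P n, ∀ q ∈ P n, (fun p : (Fin n × Fin n) × (Fin n × Fin n) => s(p.1, p.2)) p =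
      (fun p : (Fin n × Fin n) × (Fin n × Fin n) => s(p.1, p.2)) q → p = q := by
  intro p hp q hq he
  have hrp := (Finset.mem_filter.mp hp).2
  have hrq := (Finset.mem_filter.mp hq).2
  simp only [Sym2.eq_iff] at he
  rcases he with ⟨h1, h2⟩ | ⟨h1, h2⟩
  · exact Prod.ext h1 h2
  · exfalso
    rw [h1, h2] at hrp
    exact relG_asymm hrq hrp

end GridStretch

/-- **The square grid has a spanning tree of average stretch `O(log n)`.**
There is an absolute constant `C > 0` such that for every `n ≥ 2` the `n × n`
grid graph (unit edge weights, `N = n²` vertices) has a spanning tree `T` with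
total stretch `st(T) = Σ_{e=uv ∈ E} |P_T(u,v)| ≤ C · n² · log n`; equivalently,
the average stretch over the `m = Θ(n²)` edges is `O(log n)`. -/
theorem square_grid_has_spanning_tree_of_log_average_stretch :
    ∃ C : ℝ, 0 < C ∧ ∀ n : ℕ, 2 ≤ n →
      ∃ T : SimpleGraph (Fin n × Fin n),
        T ≤ gridGraph n n ∧ T.IsTree ∧
        ∑ e ∈ (gridGraph n n).edgeFinset,
            Sym2.lift ⟨fun u v => (T.dist u v : ℝ),
              fun u v => by dsimp only; rw [SimpleGraph.dist_comm]⟩ e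
          ≤ C * (n : ℝ) ^ 2 * Real.log (n : ℝ) := by
  refine ⟨100, by norm_num, fun n hn => ?_⟩
  refine ⟨GridStretch.T n, GridStretch.T_le_grid, GridStretch.T_isTree (by omega), ?_⟩
  classical
  set K := Nat.log 2 n with hKdef
  set S := ∑ i ∈ Finset.range n, (2 : ℝ) ^ GridStretch.v2 i with hSdef
  -- rewrite the sum over edges as a sum over ordered pairs
  rw [GridStretch.edgeFinset_grid, Finset.sum_image GridStretch.P_injOn]
  have hlift : ∀ p : (Fin n × Fin n) × (Fin n × Fin n),
      Sym2.lift ⟨fun u v => (((GridStretch.T n).dist u v : ℕ) : ℝ),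
        fun u v => by dsimp only; rw [SimpleGraph.dist_comm]⟩ s(p.1, p.2)
      = (((GridStretch.T n).dist p.1 p.2 : ℕ) : ℝ) := fun p => rfl
  simp only [hlift]
  -- split into vertical and horizontal pairs
  set Pv : Finset ((Fin n × Fin n) × (Fin n × Fin n)) :=
    Finset.univ.filter (fun p => p.1.1 = p.2.1 ∧ p.1.2.val + 1 = p.2.2.val) with hPv
  set Ph : Finset ((Fin n × Fin n) × (Fin n × Fin n)) :=
    Finset.univ.filter (fun p => p.1.2 = p.2.2 ∧ p.1.1.val + 1 = p.2.1.val) with hPh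
  have hsplit : GridStretch.P n = Pv ∪ Ph := by
    rw [GridStretch.P, hPv, hPh, ← Finset.filter_or]
  have hdisj : Disjoint Pv Ph := by
    rw [Finset.disjoint_left]
    intro p hp hq
    have h1 := (Finset.mem_filter.mp hp).2
    have h2 := (Finset.mem_filter.mp hq).2
    have e1 : p.1.2.val = p.2.2.val := congrArg Fin.val h2.1
    have e2 := h1.2
    omega
  rw [hsplit, Finset.sum_union hdisj]
  -- bound each part
  have hvert : ∑ p ∈ Pv, (((GridStretch.T n).dist p.1 p.2 : ℕ) : ℝ)
      ≤ ∑ w : Fin n × Fin n, 8 * (2 : ℝ) ^ GridStretch.v2 w.2.val := by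
    have step1 : ∑ p ∈ Pv, (((GridStretch.T n).dist p.1 p.2 : ℕ) : ℝ)
        ≤ ∑ p ∈ Pv, 8 * (2 : ℝ) ^ GridStretch.v2 p.2.2.val := by
      refine Finset.sum_le_sum ?_
      intro p hp
      have h := (Finset.mem_filter.mp hp).2
      exact GridStretch.dist_bound_vert p.1 p.2 h.1 h.2
    have step2 : ∑ p ∈ Pv, 8 * (2 : ℝ) ^ GridStretch.v2 p.2.2.val
        = ∑ w ∈ Pv.image Prod.snd, 8 * (2 : ℝ) ^ GridStretch.v2 w.2.val := by
      rw [Finset.sum_image ?_]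
      intro p hp q hq he
      have h1 := (Finset.mem_filter.mp hp).2
      have h2 := (Finset.mem_filter.mp hq).2
      refine Prod.ext ?_ he
      refine Prod.ext ?_ ?_
      · rw [h1.1, h2.1, he]
      · have e1 : p.1.2.val = q.1.2.val := by
          have := congrArg (fun w : Fin n × Fin n => w.2.val) he
          omega
        exact Fin.ext e1
    have step3 : ∑ w ∈ Pv.image Prod.snd, 8 * (2 : ℝ) ^ GridStretch.v2 w.2.val
        ≤ ∑ w : Fin n × Fin n, 8 * (2 : ℝ) ^ GridStretch.v2 w.2.val := by
      refine Finset.sum_le_sum_of_subset_of_nonneg (Finset.subset_univ _) ?_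
      intro w _ _
      positivity
    calc _ ≤ _ := step1
      _ = _ := step2
      _ ≤ _ := step3
  have hhoriz : ∑ p ∈ Ph, (((GridStretch.T n).dist p.1 p.2 : ℕ) : ℝ)
      ≤ ∑ w : Fin n × Fin n, 8 * (2 : ℝ) ^ GridStretch.v2 w.1.val := by
    have step1 : ∑ p ∈ Ph, (((GridStretch.T n).dist p.1 p.2 : ℕ) : ℝ)
        ≤ ∑ p ∈ Ph, 8 * (2 : ℝ) ^ GridStretch.v2 p.2.1.val := by
      refine Finset.sum_le_sum ?_
      intro p hp
      have h := (Finset.mem_filter.mp hp).2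
      exact GridStretch.dist_bound_horiz p.1 p.2 h.1 h.2
    have step2 : ∑ p ∈ Ph, 8 * (2 : ℝ) ^ GridStretch.v2 p.2.1.val
        = ∑ w ∈ Ph.image Prod.snd, 8 * (2 : ℝ) ^ GridStretch.v2 w.1.val := by
      rw [Finset.sum_image ?_]
      intro p hp q hq he
      have h1 := (Finset.mem_filter.mp hp).2
      have h2 := (Finset.mem_filter.mp hq).2
      refine Prod.ext ?_ he
      refine Prod.ext ?_ ?_
      · have e1 : p.1.1.val = q.1.1.val := by
          have := congrArg (fun w : Fin n × Fin n => w.1.val) he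
          omega
        exact Fin.ext e1
      · rw [h1.1, h2.1, he]
    have step3 : ∑ w ∈ Ph.image Prod.snd, 8 * (2 : ℝ) ^ GridStretch.v2 w.1.val
        ≤ ∑ w : Fin n × Fin n, 8 * (2 : ℝ) ^ GridStretch.v2 w.1.val := by
      refine Finset.sum_le_sum_of_subset_of_nonneg (Finset.subset_univ _) ?_
      intro w _ _
      positivity
    calc _ ≤ _ := step1
      _ = _ := step2
      _ ≤ _ := step3
  -- compute the sums over all vertices
  have h1S : ∑ y : Fin n, 8 * (2 : ℝ) ^ GridStretch.v2 y.val = 8 * S := by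
    rw [hSdef, Finset.mul_sum, ← Fin.sum_univ_eq_sum_range (fun i => 8 * (2:ℝ) ^ GridStretch.v2 i) n]
  have hsum2 : ∑ w : Fin n × Fin n, 8 * (2 : ℝ) ^ GridStretch.v2 w.2.val = 8 * n * S := by
    calc ∑ w : Fin n × Fin n, 8 * (2 : ℝ) ^ GridStretch.v2 w.2.val
        = ∑ _x : Fin n, ∑ y : Fin n, 8 * (2 : ℝ) ^ GridStretch.v2 y.val := by
          rw [Fintype.sum_prod_type]
      _ = ∑ _x : Fin n, 8 * S := by rw [h1S]
      _ = 8 * n * S := by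
          rw [Finset.sum_const, Finset.card_univ, Fintype.card_fin, nsmul_eq_mul]; ring
  have hsum1 : ∑ w : Fin n × Fin n, 8 * (2 : ℝ) ^ GridStretch.v2 w.1.val = 8 * n * S := by
    calc ∑ w : Fin n × Fin n, 8 * (2 : ℝ) ^ GridStretch.v2 w.1.val
        = ∑ x : Fin n, ∑ _y : Fin n, 8 * (2 : ℝ) ^ GridStretch.v2 x.val := by
          rw [Fintype.sum_prod_type]
      _ = ∑ x : Fin n, (n : ℝ) * (8 * (2 : ℝ) ^ GridStretch.v2 x.val) := by
          refine Finset.sum_congr rfl ?_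
          intro x _
          rw [Finset.sum_const, Finset.card_univ, Fintype.card_fin, nsmul_eq_mul]
      _ = (n : ℝ) * ∑ x : Fin n, 8 * (2 : ℝ) ^ GridStretch.v2 x.val := by
          rw [Finset.mul_sum]
      _ = 8 * n * S := by rw [h1S]; ring
  -- numeric estimates
  have hSle : S ≤ n + (K : ℝ) * ((n : ℝ) / 2) := GridStretch.SS_le n hn
  have hnR : (2 : ℝ) ≤ (n : ℝ) := by exact_mod_cast hn
  have hnpos : (0 : ℝ) < (n : ℝ) := by linarith
  have hKlog : (K : ℝ) * Real.log 2 ≤ Real.log n := by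
    have h1 : ((2 : ℕ) ^ K : ℕ) ≤ n := Nat.pow_log_le_self 2 (by omega)
    have h2 : ((2 : ℝ)) ^ K ≤ (n : ℝ) := by exact_mod_cast h1
    calc (K : ℝ) * Real.log 2 = Real.log ((2 : ℝ) ^ K) := by rw [Real.log_pow]
      _ ≤ Real.log n := Real.log_le_log (by positivity) h2
  have hl2 : (0.6931471803 : ℝ) < Real.log 2 := Real.log_two_gt_d9
  have hlogn : Real.log 2 ≤ Real.log n := Real.log_le_log (by norm_num) hnR
  have hKnn : (0 : ℝ) ≤ (K : ℝ) := Nat.cast_nonneg K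
  have hlognpos : (0 : ℝ) < Real.log n := by linarith
  -- put it together
  have htot : ∑ p ∈ Pv, (((GridStretch.T n).dist p.1 p.2 : ℕ) : ℝ)
      + ∑ p ∈ Ph, (((GridStretch.T n).dist p.1 p.2 : ℕ) : ℝ)
      ≤ 16 * (n : ℝ) * ((n : ℝ) + (K : ℝ) * ((n : ℝ) / 2)) := by
    have := hvert.trans (le_of_eq hsum2)
    have := hhoriz.trans (le_of_eq hsum1)
    nlinarith [hSle, hnpos]
  refine htot.trans ?_
  have key : (16 * (n : ℝ) * ((n : ℝ) + (K : ℝ) * ((n : ℝ) / 2))) * Real.log 2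
      ≤ (100 * (n : ℝ) ^ 2 * Real.log n) * Real.log 2 := by
    nlinarith [mul_le_mul_of_nonneg_left hKlog (by positivity : (0 : ℝ) ≤ 8 * (n : ℝ) ^ 2),
      mul_le_mul_of_nonneg_left hlogn (by positivity : (0 : ℝ) ≤ 16 * (n : ℝ) ^ 2),
      mul_pos hnpos hnpos, mul_nonneg (mul_nonneg (by norm_num : (0:ℝ) ≤ 76) (mul_pos hnpos hnpos).le) hlognpos.le]
  have hl2pos : (0 : ℝ) < Real.log 2 := by linarith
  exact le_of_mul_le_mul_right key hl2pos
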